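/- For every positive integer a, 2^{l(a)} ≤ 2·√a, with strict inequality as soon as a > 1. -/
import Mathlib


noncomputable def ell (g : ℕ) : ℕ :=
  sInf {k | ∃ a n : Fin k → ℕ, (∀ i, a i = 1 ∨ a i = 3) ∧ g = ∑ i, a i * 2 ^ n i}

noncomputable def obj (g : ℕ) : ℕ := g - ell g

lemma ell_mem_self (g : ℕ) :
    g ∈ {k | ∃ a n : Fin k → ℕ, (∀ i, a i = 1 ∨ a i = 3) ∧ g = ∑ i, a i * 2 ^ n i} :=
  ⟨fun _ => 1, fun _ => 0, fun _ => Or.inl rfl, by simp⟩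

lemma ell_spec (g : ℕ) :
    ∃ a n : Fin (ell g) → ℕ, (∀ i, a i = 1 ∨ a i = 3) ∧ g = ∑ i, a i * 2 ^ n i :=
  Nat.sInf_mem ⟨g, ell_mem_self g⟩

lemma ell_le {g k : ℕ}
    (h : ∃ a n : Fin k → ℕ, (∀ i, a i = 1 ∨ a i = 3) ∧ g = ∑ i, a i * 2 ^ n i) :
    ell g ≤ k :=
  Nat.sInf_le h

lemma ell_pos {g : ℕ} (hg : 0 < g) : 0 < ell g := by
  rcases Nat.eq_zero_or_pos (ell g) with h | h
  · exfalso
    obtain ⟨A, N, _, hsum⟩ := ell_spec g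
    have he : IsEmpty (Fin (ell g)) := by rw [h]; infer_instance
    rw [Finset.univ_eq_empty, Finset.sum_empty] at hsum
    omega
  · exact h

lemma ell_double (b : ℕ) : ell (2 * b) ≤ ell b := by
  obtain ⟨A, N, hA, hsum⟩ := ell_spec b
  refine ell_le ⟨A, fun i => N i + 1, hA, ?_⟩
  calc 2 * b = ∑ i, 2 * (A i * 2 ^ N i) := by rw [← Finset.mul_sum, ← hsum]
  _ = ∑ i, A i * 2 ^ (N i + 1) := Finset.sum_congr rfl (fun i _ => by ring)

lemma ell_step (r b : ℕ) (hr : r = 1 ∨ r = 3) : ell (r + 4 * b) ≤ ell b + 1 := by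
  obtain ⟨A, N, hA, hsum⟩ := ell_spec b
  refine ell_le ⟨Fin.cons r A, Fin.cons 0 (fun i => N i + 2), ?_, ?_⟩
  · intro i
    refine Fin.cases ?_ ?_ i
    · simpa using hr
    · intro j; simpa using hA j
  · rw [Fin.sum_univ_succ]
    simp only [Fin.cons_zero, Fin.cons_succ]
    have h2 : ∑ x, A x * 2 ^ (N x + 2) = 4 * b := by
      calc ∑ x, A x * 2 ^ (N x + 2) = ∑ x, 4 * (A x * 2 ^ N x) :=
            Finset.sum_congr rfl (fun i _ => by ring)
      _ = 4 * ∑ x, A x * 2 ^ N x := by rw [← Finset.mul_sum]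
      _ = 4 * b := by rw [← hsum]
    rw [h2]
    ring

lemma ell_key (a : ℕ) : ∀ m, 0 < a → a < 4 ^ m → ell a ≤ m := by
  induction a using Nat.strong_induction_on with
  | _ a ih =>
    intro m ha h4
    rcases Nat.eq_zero_or_pos m with rfl | hm
    · simp at h4; omega
    rcases le_or_gt a 3 with h3 | h3
    · have h1 : ell a ≤ 1 := by
        interval_cases a
        · exact ell_le ⟨fun _ => 1, fun _ => 0, fun _ => Or.inl rfl, by simp⟩
        · exact ell_le ⟨fun _ => 1, fun _ => 1, fun _ => Or.inl rfl, by simp⟩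
        · exact ell_le ⟨fun _ => 3, fun _ => 0, fun _ => Or.inr rfl, by simp⟩
      omega
    · rcases Nat.even_or_odd a with he | ho
      · obtain ⟨b, hb⟩ := he
        have hb2 : a = 2 * b := by omega
        have hble : ell (2 * b) ≤ ell b := ell_double b
        have := ih b (by omega) m (by omega) (by omega)
        rw [hb2]; omega
      · obtain ⟨m', rfl⟩ : ∃ m', m = m' + 1 := ⟨m - 1, by omega⟩
        obtain ⟨c, hc⟩ := ho
        have hr : a % 4 = 1 ∨ a % 4 = 3 := by omega
        have hab : a = a % 4 + 4 * (a / 4) := by omega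
        have hstep := ell_step (a % 4) (a / 4) hr
        have hsz : a < 4 ^ m' * 4 := by
          calc a < 4 ^ (m' + 1) := h4
          _ = 4 ^ m' * 4 := by ring
        have hblt : a / 4 < 4 ^ m' := by omega
        have hlt4 : a / 4 < a := by omega
        have hpos4 : 0 < a / 4 := by omega
        have := ih (a / 4) hlt4 m' hpos4 hblt
        rw [hab]; omega

lemma ell_ge (a : ℕ) (ha : 0 < a) : 4 ^ (ell a - 1) ≤ a := by
  by_contra h
  push_neg at h
  have := ell_key a (ell a - 1) ha h
  have := ell_pos ha
  omega

lemma ell_gt (a : ℕ) (ha : 1 < a) : 4 ^ (ell a - 1) < a := by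
  rcases lt_or_eq_of_le (ell_ge a (by omega)) with h | h
  · exact h
  · exfalso
    have h1 : ell a ≤ 1 := by
      refine ell_le ⟨fun _ => 1, fun _ => 2 * (ell a - 1), fun _ => Or.inl rfl, ?_⟩
      rw [Fin.sum_univ_one, one_mul, pow_mul]
      norm_num
      exact h.symm
    have := ell_pos (lt_trans one_pos ha)
    have : ell a = 1 := by omega
    rw [this] at h
    simp at h
    omega

theorem stmt8 (a : ℕ) (ha : 0 < a) :
    ((2 : ℝ) ^ ell a ≤ 2 * Real.sqrt a) ∧ (1 < a → (2 : ℝ) ^ ell a < 2 * Real.sqrt a) := by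
  have hk := ell_pos ha
  have hsq : (2 : ℝ) * Real.sqrt a = Real.sqrt (4 * a) := by
    rw [show (4 : ℝ) * a = 2 ^ 2 * a by ring, Real.sqrt_mul (by positivity), Real.sqrt_sq (by norm_num)]
  have hpow : ((2 : ℝ) ^ ell a) ^ 2 = 4 * 4 ^ (ell a - 1) := by
    rw [← pow_mul, show ell a * 2 = 2 * (ell a - 1) + 2 by omega]
    rw [pow_add, pow_mul]
    norm_num
    ring
  constructor
  · have h1 : (4 : ℝ) ^ (ell a - 1) ≤ a := by
      have := ell_ge a ha
      exact_mod_cast (by exact_mod_cast this : ((4 ^ (ell a - 1) : ℕ) : ℝ) ≤ (a : ℝ))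
    rw [hsq, show ((2:ℝ) ^ ell a) = |(2:ℝ) ^ ell a| from (abs_of_pos (by positivity)).symm,
      ← Real.sqrt_sq_eq_abs]
    apply Real.sqrt_le_sqrt
    rw [hpow]; linarith
  · intro ha1
    have h1 : (4 : ℝ) ^ (ell a - 1) < a := by
      have := ell_gt a ha1
      exact_mod_cast (by exact_mod_cast this : ((4 ^ (ell a - 1) : ℕ) : ℝ) < (a : ℝ))
    rw [hsq, show ((2:ℝ) ^ ell a) = |(2:ℝ) ^ ell a| from (abs_of_pos (by positivity)).symm,
      ← Real.sqrt_sq_eq_abs]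
    apply Real.sqrt_lt_sqrt (by positivity)
    rw [hpow]; linarith
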